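/- Let A be the nilpotent Matsuo algebra (characteristic 2) of a Fischer space of symplectic type. Then for every line ℓ, the operator ad_{s_ℓ} of left multiplication by the line nilpotent s_ℓ is idempotent: s_ℓ·(s_ℓ·a) = s_ℓ·a for all a ∈ A. -/

import Mathlib

/-- A partial triple system, given by a collinearity relation `col` and a map `third`
sending two distinct collinear points to the third point on their line. -/
structure IsPTS {P : Type*} (col : P → P → Prop) (third : P → P → P) : Prop where
  symm : ∀ x y, col x y → col y x
  irrefl : ∀ x, ¬ col x x
  third_symm : ∀ x y, col x y → third x y = third y x
  col_third : ∀ x y, col x y → col x (third x y)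
  third_ne_left : ∀ x y, col x y → third x y ≠ x
  third_ne_right : ∀ x y, col x y → third x y ≠ y
  third_third : ∀ x y, col x y → third x (third x y) = y
  unique_line : ∀ x y u v, col x y → col u v →
    x ∈ ({u, v, third u v} : Set P) → y ∈ ({u, v, third u v} : Set P) →
    ({x, y, third x y} : Set P) = {u, v, third u v}

/-- A subspace of a partial triple system: a set of points closed under taking
the third point of a line through two of its points. -/
def IsSubspace {P : Type*} (col : P → P → Prop) (third : P → P → P) (S : Set P) : Prop :=
  ∀ x ∈ S, ∀ y ∈ S, col x y → third x y ∈ S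

/-- The subspace generated by a set of points. -/
def fclosure {P : Type*} (col : P → P → Prop) (third : P → P → P) (T : Set P) : Set P :=
  ⋂₀ {S | T ⊆ S ∧ IsSubspace col third S}

/-- The line through two distinct collinear points, as a set. -/
def lineSet {P : Type*} (third : P → P → P) (x y : P) : Set P := {x, y, third x y}

/-- The six points of the complete quadrilateral (dual affine plane of order 2). -/
inductive CQPt | A | B | C | X | Y | Z
deriving DecidableEq

/-- The "opposite point" involution of the complete quadrilateral. -/
def CQPt.opp : CQPt → CQPt
  | .A => .X | .X => .A | .B => .Y | .Y => .B | .C => .Z | .Z => .C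

/-- Collinearity in the complete quadrilateral with lines
{A,B,C}, {A,Y,Z}, {B,X,Z}, {C,X,Y}: two points are collinear iff they are
distinct and not opposite. -/
def CQPt.col (p q : CQPt) : Prop := p ≠ q ∧ q ≠ p.opp

/-- The third point on the line through two distinct collinear points of the
complete quadrilateral. -/
def CQPt.third : CQPt → CQPt → CQPt
  | .A, .B => .C | .B, .A => .C | .A, .C => .B | .C, .A => .B | .B, .C => .A | .C, .B => .A
  | .A, .Y => .Z | .Y, .A => .Z | .A, .Z => .Y | .Z, .A => .Y | .Y, .Z => .A | .Z, .Y => .A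
  | .B, .X => .Z | .X, .B => .Z | .B, .Z => .X | .Z, .B => .X | .X, .Z => .B | .Z, .X => .B
  | .C, .X => .Y | .X, .C => .Y | .C, .Y => .X | .Y, .C => .X | .X, .Y => .C | .Y, .X => .C
  | p, _ => p

/-- A set of points is a complete quadrilateral if it is the isomorphic image of
the standard one (preserving collinearity and the `third` operation). -/
def IsCQSet {P : Type*} (col : P → P → Prop) (third : P → P → P) (S : Set P) : Prop :=
  ∃ f : CQPt → P, Function.Injective f ∧ Set.range f = S ∧
    (∀ u v, col (f u) (f v) ↔ CQPt.col u v) ∧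
    (∀ u v, CQPt.col u v → f (CQPt.third u v) = third (f u) (f v))

/-- A set of points is an affine plane of order 3 if it is the isomorphic image of
`AG(2,3)` (any two distinct points collinear, third point `-(u+v)`). -/
def IsAPSet {P : Type*} (col : P → P → Prop) (third : P → P → P) (S : Set P) : Prop :=
  ∃ f : ZMod 3 × ZMod 3 → P, Function.Injective f ∧ Set.range f = S ∧
    (∀ u v, col (f u) (f v) ↔ u ≠ v) ∧
    (∀ u v, u ≠ v → f (-(u + v)) = third (f u) (f v))

/-- A Fischer space: a partial triple system in which the subspace generated by two
distinct intersecting lines is a complete quadrilateral or an affine plane of order 3. -/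
structure IsFischer {P : Type*} (col : P → P → Prop) (third : P → P → P)
    extends IsPTS col third : Prop where
  dichotomy : ∀ x y u v, col x y → col u v →
    lineSet third x y ≠ lineSet third u v →
    (lineSet third x y ∩ lineSet third u v).Nonempty →
    IsCQSet col third (fclosure col third (lineSet third x y ∪ lineSet third u v)) ∨
    IsAPSet col third (fclosure col third (lineSet third x y ∪ lineSet third u v))

/-- A Fischer space of symplectic type: the subspace generated by two distinct
intersecting lines is always a complete quadrilateral. -/
structure IsSymplectic {P : Type*} (col : P → P → Prop) (third : P → P → P)
    extends IsPTS col third : Prop where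
  cq : ∀ x y u v, col x y → col u v →
    lineSet third x y ≠ lineSet third u v →
    (lineSet third x y ∩ lineSet third u v).Nonempty →
    IsCQSet col third (fclosure col third (lineSet third x y ∪ lineSet third u v))

/-- `A` is the nilpotent Matsuo algebra (char 2) of the geometry `(col, third)`,
with `e` the natural basis indexed by the points. -/
structure IsNilMatsuo (R : Type*) {A P : Type*} [CommRing R] [NonUnitalNonAssocCommRing A]
    [Module R A] (col : P → P → Prop) (third : P → P → P) (e : P → A) : Prop where
  char2 : (2 : R) = 0
  mul_same : ∀ p, e p * e p = 0
  mul_of_not_col : ∀ p q, p ≠ q → ¬ col p q → e p * e q = 0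
  mul_of_col : ∀ p q, p ≠ q → col p q → e p * e q = e p + e q + e (third p q)


/-!
Let `s = e a + e b + e c` for the line `ℓ = {a, b, c}`. In characteristic 2 we have `s · e x = 0`
when `x ∈ ℓ` and when `x` is collinear with no point of `ℓ`. Otherwise `x` and `ℓ` span a complete
quadrilateral, in which `x` is collinear with exactly two points of `ℓ`, say `a` and `b`; with
`y`, `z` the third points of the lines `ax`, `bx`, the lines are `abc`, `axy`, `bxz`, `cyz`, and
`s · e x = e a + e b + e y + e z`. The same formula for `y` (collinear with `a`, `c`) and `z`
(collinear with `b`, `c`) gives `s · (e y + e z) = e a + e b + e y + e z`, whence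
`s · (s · e x) = s · e x`. The incidences of the quadrilateral are decided once in the six-point
model and pulled back along the embedding.
-/

theorem subset_fclosure {P : Type*} (col : P → P → Prop) (third : P → P → P) (T : Set P) :
    T ⊆ fclosure col third T :=
  fun _ hx => Set.mem_sInter.2 fun _ hS => hS.1 hx

/-- The line nilpotent `s_ℓ` of the line `ℓ = {p, q, third p q}`. -/
def lineSum {P A : Type*} [Add A] (e : P → A) (third : P → P → P) (p q : P) : A :=
  e p + e q + e (third p q)

/-- The configuration of a complete quadrilateral with lines `{a, b, c}`, `{a, x, y}`,
`{b, x, z}` and `{c, y, z}`, where `c = third a b`, `y = third a x`, `z = third b x`;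
the pairs `(x, c)`, `(y, b)`, `(z, a)` are the opposite points. -/
def SpansQuadrilateral {P : Type*} (col : P → P → Prop) (third : P → P → P) (a b x : P) :
    Prop :=
  col a b ∧ col x a ∧ col x b ∧ x ≠ third a b ∧ ¬ col x (third a b) ∧
    col (third a b) (third a x) ∧ third (third a b) (third a x) = third b x ∧
    third a x ≠ b ∧ ¬ col (third a x) b ∧ third b x ≠ a ∧ ¬ col (third b x) a

section MatsuoAlgebra

variable {R A P : Type*} [CommRing R] [NonUnitalNonAssocCommRing A] [Module R A]
  {col : P → P → Prop} {third : P → P → P} {e : P → A}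

namespace IsNilMatsuo

theorem add_self (hM : IsNilMatsuo R col third e) (a : A) : a + a = 0 := by
  rw [← two_smul R a, hM.char2, zero_smul]

theorem mul_eq_of_col (hP : IsPTS col third) (hM : IsNilMatsuo R col third e) {p q : P}
    (hpq : col p q) : e p * e q = e p + e q + e (third p q) :=
  hM.mul_of_col p q (fun h => hP.irrefl p (h ▸ hpq)) hpq

theorem comp {Q : Type*} {col' : Q → Q → Prop} {third' : Q → Q → Q}
    (hM : IsNilMatsuo R col third e) {f : Q → P} (hf : Function.Injective f)
    (hcol : ∀ u v, col (f u) (f v) ↔ col' u v)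
    (hthird : ∀ u v, col' u v → f (third' u v) = third (f u) (f v)) :
    IsNilMatsuo R col' third' (e ∘ f) where
  char2 := hM.char2
  mul_same u := hM.mul_same (f u)
  mul_of_not_col u v huv h := hM.mul_of_not_col _ _ (hf.ne huv) ((hcol u v).not.2 h)
  mul_of_col u v huv h := by
    simp only [Function.comp_apply, hM.mul_of_col _ _ (hf.ne huv) ((hcol u v).2 h), hthird u v h]

end IsNilMatsuo

theorem lineSum_comm (hP : IsPTS col third) {p q : P} (hpq : col p q) :
    lineSum e third p q = lineSum e third q p := by
  rw [lineSum, lineSum, hP.third_symm p q hpq, add_comm (e p)]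

theorem lineSum_third_right (hP : IsPTS col third) {p q : P} (hpq : col p q) :
    lineSum e third p (third p q) = lineSum e third p q := by
  rw [lineSum, lineSum, hP.third_third p q hpq, add_right_comm]

theorem lineSum_mul_left (hP : IsPTS col third) (hM : IsNilMatsuo R col third e) {p q : P}
    (hpq : col p q) : lineSum e third p q * e p = 0 := by
  have hpr := hP.col_third p q hpq
  have hrp : third (third p q) p = q := by
    rw [← hP.third_symm _ _ hpr, hP.third_third p q hpq]
  rw [lineSum, add_mul, add_mul, hM.mul_same, hM.mul_eq_of_col hP (hP.symm _ _ hpq),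
    hM.mul_eq_of_col hP (hP.symm _ _ hpr), hrp, ← hP.third_symm p q hpq, zero_add,
    ← hM.add_self (e q + e p + e (third p q))]
  abel

theorem lineSum_mul_of_mem (hP : IsPTS col third) (hM : IsNilMatsuo R col third e) {p q x : P}
    (hpq : col p q) (hx : x ∈ lineSet third p q) : lineSum e third p q * e x = 0 := by
  rcases hx with rfl | rfl | rfl
  · exact lineSum_mul_left hP hM hpq
  · rw [lineSum_comm hP hpq]
    exact lineSum_mul_left hP hM (hP.symm _ _ hpq)
  · rw [← lineSum_third_right hP hpq, lineSum_comm hP (hP.col_third p q hpq)]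
    exact lineSum_mul_left hP hM (hP.symm _ _ (hP.col_third p q hpq))

theorem lineSum_mul_of_forall_not_col (hP : IsPTS col third) (hM : IsNilMatsuo R col third e)
    {p q x : P} (hx : x ∉ lineSet third p q) (hcol : ∀ a ∈ lineSet third p q, ¬ col x a) :
    lineSum e third p q * e x = 0 := by
  have h a (ha : a ∈ lineSet third p q) : e a * e x = 0 :=
    hM.mul_of_not_col a x (fun h => hx (h ▸ ha)) fun h => hcol a ha (hP.symm _ _ h)
  rw [lineSum, add_mul, add_mul, h p (by simp [lineSet]), h q (by simp [lineSet]),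
    h (third p q) (by simp [lineSet]), add_zero, add_zero]

theorem lineSum_mul_of_col_of_col (hP : IsPTS col third) (hM : IsNilMatsuo R col third e)
    {a b x : P} (hxa : col x a) (hxb : col x b) (hne : x ≠ third a b)
    (hnc : ¬ col x (third a b)) :
    lineSum e third a b * e x = e a + e b + e (third a x) + e (third b x) := by
  rw [lineSum, add_mul, add_mul, hM.mul_eq_of_col hP (hP.symm _ _ hxa),
    hM.mul_eq_of_col hP (hP.symm _ _ hxb),
    hM.mul_of_not_col _ _ hne.symm fun h => hnc (hP.symm _ _ h), add_zero,
    show e a + e x + e (third a x) + (e b + e x + e (third b x)) =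
      e a + e b + e (third a x) + e (third b x) + (e x + e x) by abel, hM.add_self, add_zero]

theorem lineSum_mul_lineSum_mul_of_spansQuadrilateral (hP : IsPTS col third)
    (hM : IsNilMatsuo R col third e) {a b x : P} (h : SpansQuadrilateral col third a b x) :
    lineSum e third a b * (lineSum e third a b * e x) = lineSum e third a b * e x := by
  obtain ⟨hab, hxa, hxb, hxc, hxc', hcy, hcyz, hyb, hyb', hza, hza'⟩ := h
  set c := third a b
  set y := third a x
  set z := third b x
  have hcz : col c z := hcyz ▸ hP.col_third c y hcy
  have hsx : lineSum e third a b * e x = e a + e b + e y + e z :=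
    lineSum_mul_of_col_of_col hP hM hxa hxb hxc hxc'
  have hsy : lineSum e third a b * e y = e a + e c + e x + e z := by
    have hacb : third a c = b := hP.third_third a b hab
    rw [← lineSum_third_right hP hab, lineSum_mul_of_col_of_col hP hM
      (hP.symm _ _ (hP.col_third a x (hP.symm _ _ hxa))) (hP.symm _ _ hcy) (hacb ▸ hyb)
      (hacb ▸ hyb'), hP.third_third a x (hP.symm _ _ hxa), hcyz]
  have hsz : lineSum e third a b * e z = e b + e c + e x + e y := by
    have hbca : third b c = a := by
      rw [show c = third b a from hP.third_symm a b hab, hP.third_third b a (hP.symm _ _ hab)]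
    have hczy : third c z = y := by rw [← hcyz, hP.third_third c y hcy]
    rw [lineSum_comm hP hab, ← lineSum_third_right hP (hP.symm _ _ hab),
      ← hP.third_symm a b hab, lineSum_mul_of_col_of_col (x := z) hP hM
      (hP.symm _ _ (hP.col_third b x (hP.symm _ _ hxb))) (hP.symm _ _ hcz) (hbca ▸ hza)
      (hbca ▸ hza'), hP.third_third b x (hP.symm _ _ hxb), hczy]
  calc lineSum e third a b * (lineSum e third a b * e x)
      = 0 + 0 + (e a + e c + e x + e z) + (e b + e c + e x + e y) := by
        rw [hsx, mul_add, mul_add, mul_add, hsy, hsz, lineSum_mul_left hP hM hab,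
          lineSum_comm hP hab, lineSum_mul_left hP hM (hP.symm _ _ hab)]
    _ = e a + e b + e y + e z + (e c + e c) + (e x + e x) := by abel
    _ = lineSum e third a b * e x := by rw [hM.add_self, hM.add_self, add_zero, add_zero, hsx]

end MatsuoAlgebra

namespace CQPt

instance : Fintype CQPt := Fintype.ofList [A, B, C, X, Y, Z] fun x => by cases x <;> decide

instance (p q : CQPt) : Decidable (CQPt.col p q) := inferInstanceAs (Decidable (_ ∧ _))

theorem isPTS : IsPTS CQPt.col CQPt.third where
  symm := by decide
  irrefl := by decide
  third_symm := by decide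
  col_third := by decide
  third_ne_left := by decide
  third_ne_right := by decide
  third_third := by decide
  unique_line := by
    intro x y u v _ _ hx hy
    simp only [Set.mem_insert_iff, Set.mem_singleton_iff] at hx hy
    ext z
    simp only [Set.mem_insert_iff, Set.mem_singleton_iff]
    revert x y u v z
    decide

theorem spansQuadrilateral_of_not_mem {u v t : CQPt} (huv : CQPt.col u v)
    (ht : t ∉ lineSet CQPt.third u v) :
    SpansQuadrilateral CQPt.col CQPt.third u v t ∨
      SpansQuadrilateral CQPt.col CQPt.third u (CQPt.third u v) t ∨
      SpansQuadrilateral CQPt.col CQPt.third v (CQPt.third u v) t := by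
  simp only [lineSet, Set.mem_insert_iff, Set.mem_singleton_iff, not_or] at ht
  unfold SpansQuadrilateral
  revert u v t
  decide

theorem lineSum_mul_lineSum_mul {R A : Type*} [CommRing R] [NonUnitalNonAssocCommRing A]
    [Module R A] {E : CQPt → A} (hM : IsNilMatsuo R CQPt.col CQPt.third E) {u v : CQPt}
    (huv : CQPt.col u v) (t : CQPt) :
    lineSum E CQPt.third u v * (lineSum E CQPt.third u v * E t) =
      lineSum E CQPt.third u v * E t := by
  by_cases ht : t ∈ lineSet CQPt.third u v
  · rw [lineSum_mul_of_mem isPTS hM huv ht, mul_zero]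
  rcases spansQuadrilateral_of_not_mem huv ht with h | h | h
  · exact lineSum_mul_lineSum_mul_of_spansQuadrilateral isPTS hM h
  · rw [← lineSum_third_right isPTS huv]
    exact lineSum_mul_lineSum_mul_of_spansQuadrilateral isPTS hM h
  · have hvw : lineSum E CQPt.third v (CQPt.third u v) = lineSum E CQPt.third u v := by
      rw [isPTS.third_symm u v huv, lineSum_third_right isPTS (isPTS.symm u v huv),
        lineSum_comm isPTS (isPTS.symm u v huv)]
    rw [← hvw]
    exact lineSum_mul_lineSum_mul_of_spansQuadrilateral isPTS hM h

end CQPt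

section Symplectic

variable {R A P : Type*} [CommRing R] [NonUnitalNonAssocCommRing A] [Module R A]
  {col : P → P → Prop} {third : P → P → P} {e : P → A}

namespace IsSymplectic

theorem lineSum_mul_lineSum_mul_of_col (hS : IsSymplectic col third)
    (hM : IsNilMatsuo R col third e) {p q x a : P} (hpq : col p q)
    (hx : x ∉ lineSet third p q) (ha : a ∈ lineSet third p q) (hxa : col x a) :
    lineSum e third p q * (lineSum e third p q * e x) = lineSum e third p q * e x := by
  have hx' : x ∈ lineSet third x a := by simp [lineSet]
  obtain ⟨f, hf, hrange, hcol, hthird⟩ := hS.cq p q x a hpq hxa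
    (fun h => hx (h ▸ hx')) ⟨a, ha, by simp [lineSet]⟩
  have hsub := hrange ▸ subset_fclosure col third (lineSet third p q ∪ lineSet third x a)
  obtain ⟨u, rfl⟩ := hsub (Or.inl (by simp [lineSet]) : p ∈ _)
  obtain ⟨v, rfl⟩ := hsub (Or.inl (by simp [lineSet]) : q ∈ _)
  obtain ⟨t, rfl⟩ := hsub (Or.inr hx')
  have huv : CQPt.col u v := (hcol u v).1 hpq
  rw [lineSum, ← hthird u v huv]
  exact CQPt.lineSum_mul_lineSum_mul (hM.comp hf hcol hthird) huv t

theorem lineSum_mul_lineSum_mul (hS : IsSymplectic col third)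
    (hM : IsNilMatsuo R col third e) {p q : P} (hpq : col p q) (x : P) :
    lineSum e third p q * (lineSum e third p q * e x) = lineSum e third p q * e x := by
  by_cases hx : x ∈ lineSet third p q
  · rw [lineSum_mul_of_mem hS.toIsPTS hM hpq hx, mul_zero]
  by_cases hcol : ∃ a ∈ lineSet third p q, col x a
  · obtain ⟨a, ha, hxa⟩ := hcol
    exact hS.lineSum_mul_lineSum_mul_of_col hM hpq hx ha hxa
  push Not at hcol
  rw [lineSum_mul_of_forall_not_col hS.toIsPTS hM hx hcol, mul_zero]

end IsSymplectic

end Symplectic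

theorem stmt7_general {R A P : Type*} [CommRing R] [NonUnitalNonAssocCommRing A]
    [Module R A] [SMulCommClass R A A]
    (col : P → P → Prop) (third : P → P → P)
    (hS : IsSymplectic col third)
    (e : Module.Basis P R A) (hM : IsNilMatsuo R col third ⇑e)
    (p q : P) (hpq : col p q) :
    ∀ a : A, (e p + e q + e (third p q)) * ((e p + e q + e (third p q)) * a) =
      (e p + e q + e (third p q)) * a := by
  let s := LinearMap.mulLeft R (lineSum e third p q)
  have hs : s ∘ₗ s = s := e.ext (hS.lineSum_mul_lineSum_mul hM hpq)
  exact LinearMap.congr_fun hs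

/-- In the nilpotent Matsuo algebra (characteristic 2) of a Fischer space of symplectic
type, left multiplication by any line nilpotent `s_ℓ` is an idempotent operator:
`s_ℓ · (s_ℓ · a) = s_ℓ · a` for all `a`. -/
theorem stmt7 {R A P : Type*} [CommRing R] [NonUnitalNonAssocCommRing A]
    [Module R A] [SMulCommClass R A A] [IsScalarTower R A A]
    (col : P → P → Prop) (third : P → P → P)
    (hS : IsSymplectic col third)
    (e : Module.Basis P R A) (hM : IsNilMatsuo R col third ⇑e)
    (p q : P) (hpq : col p q) :
    ∀ a : A, (e p + e q + e (third p q)) * ((e p + e q + e (third p q)) * a) =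
      (e p + e q + e (third p q)) * a :=
  stmt7_general col third hS e hM p q hpq
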